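/- Let C ⊆ 𝔤 be an invariant cone. Then {x ∈ 𝔤 : [h,x] ∈ C} = C₊ ⊕ 𝔤⁰ ⊕ C₋; i.e. the preimage of C under the linear map ad h equals the subset of elements x = x₋₁ + x₀ + x₁ (xⱼ ∈ 𝔤ʲ) with x₁ ∈ C₊ and x₋₁ ∈ C₋. -/

import Mathlib

/-!
Write `⁅h, x⁆ = u + v` with `⁅h, u⁆ = -u` and `⁅h, v⁆ = v`. Invariance under
`e^{ad (s • h)}` puts `e^{-s} • u + e^{s} • v` in `C` for every real `s`; rescaling by
`e^{∓s}` and letting `s → ∞` shows, since `C` is a closed cone, that `u` and `v` lie in `C`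
separately. Conversely `C` is closed under addition, being a convex cone.
-/

/-- The exponential `e^{ad y}` of the endomorphism `ad y` of a topological Lie algebra,
defined by the exponential series. -/
noncomputable def expAd {L : Type*} [LieRing L] [LieAlgebra ℝ L] [TopologicalSpace L]
    (y : L) (x : L) : L :=
  ∑' n : ℕ, ((n.factorial : ℝ)⁻¹) • ((LieAlgebra.ad ℝ L y ^ n) x)

open Filter Topology

theorem Convex.add_mem_of_smul_mem {E : Type*} [AddCommGroup E] [Module ℝ E] {s : Set E}
    (hs : Convex ℝ s) (hsmul : ∀ r : ℝ, 0 ≤ r → ∀ x ∈ s, r • x ∈ s) {u v : E}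
    (hu : u ∈ s) (hv : v ∈ s) : u + v ∈ s := by
  have hmid := hs hu hv (by norm_num : (0 : ℝ) ≤ 1 / 2) (by norm_num : (0 : ℝ) ≤ 1 / 2)
    (by norm_num)
  convert hsmul 2 zero_le_two _ hmid using 1
  rw [smul_add, smul_smul, smul_smul]
  norm_num

theorem IsClosed.mem_of_tendsto_smul_add_mem {E ι : Type*} [AddCommGroup E] [Module ℝ E]
    [TopologicalSpace E] [ContinuousAdd E] [ContinuousSMul ℝ E] {l : Filter ι} [l.NeBot]
    {s : Set E} (hs : IsClosed s) {f : ι → ℝ} (hf : Tendsto f l (𝓝 0)) {u v : E}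
    (hmem : ∀ i, f i • u + v ∈ s) : v ∈ s := by
  have hlim : Tendsto (fun i => f i • u + v) l (𝓝 v) := by
    simpa using (hf.smul_const u).add_const v
  exact hs.mem_of_tendsto hlim (Eventually.of_forall hmem)

theorem IsClosed.mem_of_forall_exp_neg_smul_add_exp_smul_mem {E : Type*} [AddCommGroup E]
    [Module ℝ E] [TopologicalSpace E] [ContinuousAdd E] [ContinuousSMul ℝ E] {C : Set E}
    (hCcl : IsClosed C) (hCcone : ∀ r : ℝ, 0 ≤ r → ∀ x ∈ C, r • x ∈ C) {u v : E}
    (hmem : ∀ s : ℝ, Real.exp (-s) • u + Real.exp s • v ∈ C) : v ∈ C := by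
  have hlim : Tendsto (fun s : ℝ => Real.exp (-s) * Real.exp (-s)) atTop (𝓝 0) := by
    simpa using Real.tendsto_exp_neg_atTop_nhds_zero.mul Real.tendsto_exp_neg_atTop_nhds_zero
  refine hCcl.mem_of_tendsto_smul_add_mem hlim (u := u) fun s => ?_
  convert hCcone _ (Real.exp_pos (-s)).le _ (hmem s) using 1
  rw [smul_add, smul_smul, smul_smul, ← Real.exp_add (-s) s, neg_add_cancel, Real.exp_zero,
    one_smul]

section Eigenvector

variable {L : Type*} [LieRing L] [LieAlgebra ℝ L] {h x : L} {r : ℝ}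

theorem ad_smul_pow_apply_of_lie_eq_smul (hx : ⁅h, x⁆ = r • x) (t : ℝ) (n : ℕ) :
    (LieAlgebra.ad ℝ L (t • h) ^ n) x = (r * t) ^ n • x := by
  induction n with
  | zero => simp
  | succ n ih =>
    rw [pow_succ', Module.End.mul_apply, ih, map_smul, LieAlgebra.ad_apply, smul_lie, hx,
      smul_smul, smul_smul, pow_succ']
    ring_nf

variable [TopologicalSpace L] [ContinuousSMul ℝ L]

theorem hasSum_expAd_smul_of_lie_eq_smul (hx : ⁅h, x⁆ = r • x) (t : ℝ) :
    HasSum (fun n : ℕ => ((n.factorial : ℝ)⁻¹) • (LieAlgebra.ad ℝ L (t • h) ^ n) x)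
      (Real.exp (r * t) • x) := by
  have hexp : HasSum (fun n : ℕ => (r * t) ^ n / n.factorial) (Real.exp (r * t)) := by
    rw [Real.exp_eq_exp_ℝ]
    exact NormedSpace.expSeries_div_hasSum_exp (r * t)
  convert hexp.smul_const x using 2 with n
  rw [ad_smul_pow_apply_of_lie_eq_smul hx, smul_smul, div_eq_inv_mul]

end Eigenvector

section InvariantCone

variable {L : Type*} [LieRing L] [LieAlgebra ℝ L]
  [TopologicalSpace L] [ContinuousAdd L] [ContinuousSMul ℝ L] [T2Space L]
  {h u v : L} {C : Set L}

theorem expAd_smul_add_of_lie_eq (hu : ⁅h, u⁆ = -u) (hv : ⁅h, v⁆ = v) (s : ℝ) :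
    expAd (s • h) (u + v) = Real.exp (-s) • u + Real.exp s • v := by
  have hu' : ⁅h, u⁆ = (-1 : ℝ) • u := by rw [hu, neg_one_smul]
  have hv' : ⁅h, v⁆ = (1 : ℝ) • v := by rw [hv, one_smul]
  have hsum := (hasSum_expAd_smul_of_lie_eq_smul hu' s).add
    (hasSum_expAd_smul_of_lie_eq_smul hv' s)
  simp only [← smul_add, ← map_add, neg_one_mul, one_mul] at hsum
  exact hsum.tsum_eq

theorem exp_neg_smul_add_exp_smul_mem (hCinv : ∀ y : L, expAd y '' C = C)
    (hu : ⁅h, u⁆ = -u) (hv : ⁅h, v⁆ = v) (huv : u + v ∈ C) (s : ℝ) :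
    Real.exp (-s) • u + Real.exp s • v ∈ C := by
  rw [← expAd_smul_add_of_lie_eq hu hv, ← hCinv (s • h)]
  exact Set.mem_image_of_mem _ huv

theorem mem_and_mem_of_add_mem (hCcl : IsClosed C)
    (hCcone : ∀ r : ℝ, 0 ≤ r → ∀ x ∈ C, r • x ∈ C) (hCinv : ∀ y : L, expAd y '' C = C)
    (hu : ⁅h, u⁆ = -u) (hv : ⁅h, v⁆ = v) (huv : u + v ∈ C) : u ∈ C ∧ v ∈ C := by
  have hmem := exp_neg_smul_add_exp_smul_mem hCinv hu hv huv
  refine ⟨hCcl.mem_of_forall_exp_neg_smul_add_exp_smul_mem hCcone (u := v) fun s => ?_,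
    hCcl.mem_of_forall_exp_neg_smul_add_exp_smul_mem hCcone hmem⟩
  simpa only [neg_neg, add_comm] using hmem (-s)

end InvariantCone

theorem lie_add_add_of_eigen {L : Type*} [LieRing L] {h a b c : L}
    (ha : ⁅h, a⁆ = -a) (hb : ⁅h, b⁆ = 0) (hc : ⁅h, c⁆ = c) : ⁅h, a + b + c⁆ = -a + c := by
  rw [lie_add, lie_add, ha, hb, hc, add_zero]

theorem statement1_general {L : Type*} [LieRing L] [LieAlgebra ℝ L]
    [TopologicalSpace L] [IsTopologicalAddGroup L] [ContinuousSMul ℝ L] [T2Space L]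
    (h : L)
    (hgrad : ∀ x : L, ∃ a b c : L,
      ⁅h, a⁆ = -a ∧ ⁅h, b⁆ = 0 ∧ ⁅h, c⁆ = c ∧ x = a + b + c)
    (C : Set L) (hCcl : IsClosed C) (hCcv : Convex ℝ C)
    (hCcone : ∀ r : ℝ, 0 ≤ r → ∀ x ∈ C, r • x ∈ C)
    (hCinv : ∀ y : L, expAd y '' C = C) :
    {x : L | ⁅h, x⁆ ∈ C} =
      {x : L | ∃ a b c : L, ⁅h, a⁆ = -a ∧ ⁅h, b⁆ = 0 ∧ ⁅h, c⁆ = c ∧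
        -a ∈ C ∧ c ∈ C ∧ x = a + b + c} := by
  ext x
  constructor
  · intro hx
    obtain ⟨a, b, c, ha, hb, hc, rfl⟩ := hgrad x
    have hna : ⁅h, -a⁆ = -(-a) := by rw [lie_neg, ha]
    obtain ⟨hnaC, hcC⟩ := mem_and_mem_of_add_mem hCcl hCcone hCinv hna hc
      (lie_add_add_of_eigen ha hb hc ▸ hx)
    exact ⟨a, b, c, ha, hb, hc, hnaC, hcC, rfl⟩
  · rintro ⟨a, b, c, ha, hb, hc, hnaC, hcC, rfl⟩
    change ⁅h, a + b + c⁆ ∈ C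
    rw [lie_add_add_of_eigen ha hb hc]
    exact hCcv.add_mem_of_smul_mem hCcone hnaC hcC

/-- if `𝔤` is 3-graded by `ad h` and `C` is an invariant cone, then
`(ad h)⁻¹(C) = C₊ ⊕ 𝔤⁰ ⊕ C₋`: an element `x` satisfies `[h,x] ∈ C` if and only if it
can be written `x = a + b + c` with `a ∈ 𝔤⁻¹`, `b ∈ 𝔤⁰`, `c ∈ 𝔤¹` such that
`c ∈ C₊` (i.e. `c ∈ C`) and `a ∈ C₋` (i.e. `-a ∈ C`). -/
theorem statement1 {L : Type*} [LieRing L] [LieAlgebra ℝ L]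
    [TopologicalSpace L] [IsTopologicalAddGroup L] [ContinuousSMul ℝ L] [T2Space L]
    [FiniteDimensional ℝ L]
    (h : L)
    (hgrad : ∀ x : L, ∃ a b c : L,
      ⁅h, a⁆ = -a ∧ ⁅h, b⁆ = 0 ∧ ⁅h, c⁆ = c ∧ x = a + b + c)
    (C : Set L) (hCcl : IsClosed C) (hCcv : Convex ℝ C)
    (hCcone : ∀ r : ℝ, 0 ≤ r → ∀ x ∈ C, r • x ∈ C)
    (hCinv : ∀ y : L, expAd y '' C = C) :
    {x : L | ⁅h, x⁆ ∈ C} =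
      {x : L | ∃ a b c : L, ⁅h, a⁆ = -a ∧ ⁅h, b⁆ = 0 ∧ ⁅h, c⁆ = c ∧
        -a ∈ C ∧ c ∈ C ∧ x = a + b + c} :=
  statement1_general h hgrad C hCcl hCcv hCcone hCinv
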